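/- Let f(z) = |z|^{4/(N−2)} z with 3 ≤ N ≤ 6, and let ∂_z f, ∂_z̄ f denote the Wirtinger derivatives. Then |∂_z f(u) − ∂_z f(v)| ≤ C|u−v|(|u|^{(6−N)/(N−2)} + |v|^{(6−N)/(N−2)}) for all u, v ∈ ℂ, and similarly for ∂_z̄ f. -/

import Mathlib

/-!
Write `α = 4/(N-2) ≥ 1`. A direct computation gives `∂_z f = (1 + α/2) |z|^α` and
`∂_z̄ f = (α/2) |z|^(α-2) z²`. Each is a function `g` with `|g z| ≲ |z|^α` everywhere and
`|Dg z| ≲ |z|^(α-1)` away from `0`. For such `g` and `|v| ≤ |u|`: if `|u| ≤ 2|u - v|` the crude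
bound `|g u| + |g v|` suffices; otherwise the segment `[v, u]` stays outside the ball of radius
`|u|/2`, and the mean value inequality along it, with `|Dg| ≲ |u|^(α-1)` there since `α ≥ 1`,
finishes the proof.
-/

/-- The Wirtinger derivative `∂_z f = ½(∂_x f − i ∂_y f)`, for `f : ℂ → ℂ` viewed as a
real-differentiable function. -/
noncomputable def wirtingerZ (f : ℂ → ℂ) (u : ℂ) : ℂ :=
  (fderiv ℝ f u 1 - Complex.I * fderiv ℝ f u Complex.I) / 2

/-- The Wirtinger derivative `∂_z̄ f = ½(∂_x f + i ∂_y f)`. -/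
noncomputable def wirtingerZbar (f : ℂ → ℂ) (u : ℂ) : ℂ :=
  (fderiv ℝ f u 1 + Complex.I * fderiv ℝ f u Complex.I) / 2

open Complex

section NormRpow

variable {E : Type*} [NormedAddCommGroup E] [InnerProductSpace ℝ E]

theorem hasFDerivAt_norm_rpow_of_ne_zero {x : E} (hx : x ≠ 0) (p : ℝ) :
    HasFDerivAt (fun x : E ↦ ‖x‖ ^ p) ((p * ‖x‖ ^ (p - 2)) • innerSL ℝ x) x := by
  have hsq := (hasStrictFDerivAt_norm_sq x).hasFDerivAt.rpow_const (p := p / 2)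
    (.inl (by positivity))
  convert hsq using 1
  · funext y
    rw [← Real.rpow_natCast_mul (norm_nonneg y)]
    ring_nf
  · rw [← Real.rpow_natCast_mul (norm_nonneg x), ← Nat.cast_smul_eq_nsmul ℝ, smul_smul]
    ring_nf

theorem norm_smul_innerSL_eq {x : E} (hx : x ≠ 0) (p : ℝ) :
    ‖(p * ‖x‖ ^ (p - 2)) • innerSL ℝ x‖ = |p| * ‖x‖ ^ (p - 1) := by
  rw [norm_smul, innerSL_apply_norm, Real.norm_eq_abs, abs_mul,
    abs_of_nonneg (by positivity : 0 ≤ ‖x‖ ^ (p - 2)), mul_assoc,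
    ← Real.rpow_add_one (norm_ne_zero_iff.2 hx)]
  ring_nf

theorem hasFDerivAt_norm_rpow_smul_of_ne_zero {x : E} (hx : x ≠ 0) (p : ℝ) :
    HasFDerivAt (fun x : E ↦ ‖x‖ ^ p • x)
      (‖x‖ ^ p • ContinuousLinearMap.id ℝ E
        + ((p * ‖x‖ ^ (p - 2)) • innerSL ℝ x).smulRight x) x :=
  (hasFDerivAt_norm_rpow_of_ne_zero hx p).smul (hasFDerivAt_id x)

end NormRpow

theorem hasFDerivAt_norm_rpow_smul_zero {E : Type*} [NormedAddCommGroup E] [NormedSpace ℝ E]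
    {p : ℝ} (hp : 0 < p) :
    HasFDerivAt (fun x : E ↦ ‖x‖ ^ p • x) (0 : E →L[ℝ] E) 0 := by
  have hlim : Filter.Tendsto (fun x : E ↦ ‖x‖ ^ p) (nhds 0) (nhds 0) := by
    simpa [Real.zero_rpow hp.ne'] using
      (continuous_norm.rpow_const fun _ ↦ .inr hp.le).tendsto (0 : E)
  refine .of_isLittleO ?_
  simpa using ((Asymptotics.isLittleO_one_iff ℝ).2 hlim).smul_isBigO
    (Asymptotics.isBigO_refl (fun x : E ↦ x) _)

theorem norm_sub_le_of_norm_le_rpow {E F : Type*} [NormedAddCommGroup E] [NormedAddCommGroup F]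
    {α K : ℝ} (hα : 1 ≤ α) (hK : 0 ≤ K) {g : E → F} (hg : ∀ x, ‖g x‖ ≤ K * ‖x‖ ^ α) {u v : E}
    (hvu : ‖v‖ ≤ ‖u‖) (hu : ‖u‖ ≤ 2 * ‖u - v‖) :
    ‖g u - g v‖ ≤ 2 * K * ‖u - v‖ * (‖u‖ ^ (α - 1) + ‖v‖ ^ (α - 1)) := by
  have hsplit : ∀ x : E, ‖x‖ ^ α = ‖x‖ ^ (α - 1) * ‖x‖ := fun x ↦ by
    rw [← Real.rpow_add_one' (norm_nonneg x) (by linarith)]; ring_nf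
  have hu' : 0 ≤ ‖u‖ ^ (α - 1) := by positivity
  have hv' : 0 ≤ ‖v‖ ^ (α - 1) := by positivity
  calc ‖g u - g v‖ ≤ K * ‖u‖ ^ α + K * ‖v‖ ^ α :=
        (norm_sub_le _ _).trans (add_le_add (hg u) (hg v))
    _ ≤ 2 * K * ‖u - v‖ * (‖u‖ ^ (α - 1) + ‖v‖ ^ (α - 1)) := by
      rw [hsplit u, hsplit v]
      nlinarith [mul_le_mul_of_nonneg_left hu (mul_nonneg hK hu'),
        mul_le_mul_of_nonneg_left (hvu.trans hu) (mul_nonneg hK hv')]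

section RpowBounds

variable {E F : Type*} [NormedAddCommGroup E] [NormedSpace ℝ E]
  [NormedAddCommGroup F] [NormedSpace ℝ F]

theorem norm_sub_le_of_fderiv_le_rpow {α K : ℝ} (hα : 1 ≤ α) (hK : 0 ≤ K) {g : E → F}
    (hg : ∀ x ≠ 0, DifferentiableAt ℝ g x)
    (hg' : ∀ x ≠ 0, ‖fderiv ℝ g x‖ ≤ K * ‖x‖ ^ (α - 1)) {u v : E} (hvu : ‖v‖ ≤ ‖u‖)
    (huv : ‖u - v‖ < ‖u‖) :
    ‖g u - g v‖ ≤ K * ‖u‖ ^ (α - 1) * ‖u - v‖ := by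
  have hball : segment ℝ v u ⊆ Metric.closedBall 0 ‖u‖ :=
    (convex_closedBall 0 ‖u‖).segment_subset (by simpa using hvu) (by simp)
  have hnear : segment ℝ v u ⊆ Metric.closedBall u ‖u - v‖ :=
    (convex_closedBall u _).segment_subset (by simp [dist_eq_norm, norm_sub_rev])
      (Metric.mem_closedBall_self (norm_nonneg _))
  have hne : ∀ x ∈ segment ℝ v u, x ≠ 0 := by
    rintro x hx rfl
    have := hnear hx
    rw [Metric.mem_closedBall, dist_zero_left] at this
    linarith
  refine (convex_segment v u).norm_image_sub_le_of_norm_fderiv_le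
    (fun x hx ↦ hg x (hne x hx)) (fun x hx ↦ (hg' x (hne x hx)).trans ?_)
    (left_mem_segment ℝ v u) (right_mem_segment ℝ v u)
  have hxu : ‖x‖ ≤ ‖u‖ := by simpa using hball hx
  gcongr

theorem norm_sub_le_of_rpow_bounds {α K : ℝ} (hα : 1 ≤ α) (hK : 0 ≤ K) {g : E → F}
    (hg : ∀ x, ‖g x‖ ≤ K * ‖x‖ ^ α) (hg_diff : ∀ x ≠ 0, DifferentiableAt ℝ g x)
    (hg' : ∀ x ≠ 0, ‖fderiv ℝ g x‖ ≤ K * ‖x‖ ^ (α - 1)) (u v : E) :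
    ‖g u - g v‖ ≤ 2 * K * ‖u - v‖ * (‖u‖ ^ (α - 1) + ‖v‖ ^ (α - 1)) := by
  wlog hvu : ‖v‖ ≤ ‖u‖ generalizing u v
  · rw [norm_sub_rev, norm_sub_rev u, add_comm]
    exact this v u (le_of_not_ge hvu)
  rcases le_or_gt ‖u‖ (2 * ‖u - v‖) with hu | hu
  · exact norm_sub_le_of_norm_le_rpow hα hK hg hvu hu
  · calc ‖g u - g v‖ ≤ K * ‖u‖ ^ (α - 1) * ‖u - v‖ :=
          norm_sub_le_of_fderiv_le_rpow hα hK hg_diff hg' hvu (by linarith [norm_nonneg (u - v)])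
      _ ≤ 2 * K * ‖u - v‖ * (‖u‖ ^ (α - 1) + ‖v‖ ^ (α - 1)) := by
        have hu_nonneg : 0 ≤ K * ‖u‖ ^ (α - 1) * ‖u - v‖ := by positivity
        have hv_nonneg : 0 ≤ K * ‖u - v‖ * ‖v‖ ^ (α - 1) := by positivity
        linarith

end RpowBounds

theorem Complex.norm_rpow_eq_rpow_sub_two_mul {u : ℂ} (hu : u ≠ 0) (α : ℝ) :
    ‖u‖ ^ α = ‖u‖ ^ (α - 2) * (u.re * u.re + u.im * u.im) := by
  rw [← normSq_apply, ← Complex.sq_norm, ← Real.rpow_natCast,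
    ← Real.rpow_add (norm_pos_iff.2 hu)]
  ring_nf

theorem wirtingerZ_norm_rpow_mul {α : ℝ} (hα : 0 < α) (u : ℂ) :
    wirtingerZ (fun z ↦ ((‖z‖ ^ α : ℝ) : ℂ) * z) u = ((1 + α / 2) * ‖u‖ ^ α : ℝ) := by
  simp_rw [← real_smul]
  rcases eq_or_ne u 0 with rfl | hu
  · rw [wirtingerZ, (hasFDerivAt_norm_rpow_smul_zero hα).fderiv]
    simp [hα.ne']
  rw [wirtingerZ, (hasFDerivAt_norm_rpow_smul_of_ne_zero hu α).fderiv]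
  simp only [norm_rpow_eq_rpow_sub_two_mul hu α, add_apply, smul_apply, ContinuousLinearMap.id_apply,
    real_smul, ofReal_mul, ofReal_add, mul_one, ContinuousLinearMap.smulRight_apply,
    coe_innerSL_apply, Complex.inner, one_mul, conj_re, smul_eq_mul, mul_re, I_re, zero_mul, I_im,
    conj_im, mul_neg, sub_neg_eq_add, zero_add, ofReal_one, ofReal_div, ofReal_ofNat,
    Complex.ext_iff, div_ofNat_re, sub_re, add_re, ofReal_re, ofReal_im, mul_zero, sub_zero, add_im,
    mul_im, add_zero, sub_self, zero_sub, neg_add_rev, one_re, one_im, div_ofNat_im, zero_div,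
    sub_im, div_eq_zero_iff, OfNat.ofNat_ne_zero, or_false]
  constructor <;> ring

theorem wirtingerZbar_norm_rpow_mul {α : ℝ} (hα : 0 < α) (u : ℂ) :
    wirtingerZbar (fun z ↦ ((‖z‖ ^ α : ℝ) : ℂ) * z) u = (α / 2) • (‖u‖ ^ (α - 2) • u ^ 2) := by
  simp_rw [← real_smul]
  rcases eq_or_ne u 0 with rfl | hu
  · rw [wirtingerZbar, (hasFDerivAt_norm_rpow_smul_zero hα).fderiv]
    simp
  rw [wirtingerZbar, (hasFDerivAt_norm_rpow_smul_of_ne_zero hu α).fderiv]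
  simp only [norm_rpow_eq_rpow_sub_two_mul hu α, add_apply, smul_apply, ContinuousLinearMap.id_apply,
    real_smul, ofReal_mul, ofReal_add, mul_one, ContinuousLinearMap.smulRight_apply,
    coe_innerSL_apply, Complex.inner, one_mul, conj_re, smul_eq_mul, mul_re, I_re, zero_mul, I_im,
    conj_im, mul_neg, sub_neg_eq_add, zero_add, sq, ofReal_div, ofReal_ofNat, Complex.ext_iff,
    div_ofNat_re, add_re, ofReal_re, ofReal_im, mul_zero, sub_zero, add_im, mul_im, add_zero,
    sub_self, zero_sub, neg_add_rev, div_ofNat_im, zero_div]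
  constructor <;> ring

theorem norm_norm_rpow_sub_two_smul_sq {α : ℝ} (hα : 0 < α) (x : ℂ) :
    ‖‖x‖ ^ (α - 2) • x ^ 2‖ = ‖x‖ ^ α := by
  rcases eq_or_ne x 0 with rfl | hx
  · simp [hα.ne']
  rw [norm_smul, norm_pow, Real.norm_of_nonneg (by positivity), ← Real.rpow_natCast,
    ← Real.rpow_add (norm_pos_iff.2 hx)]
  ring_nf

theorem hasFDerivAt_norm_rpow_smul_sq {x : ℂ} (hx : x ≠ 0) (p : ℝ) :
    HasFDerivAt (fun z : ℂ ↦ ‖z‖ ^ p • z ^ 2)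
      (‖x‖ ^ p • ((2 * x) • ContinuousLinearMap.id ℝ ℂ)
        + ((p * ‖x‖ ^ (p - 2)) • innerSL ℝ x).smulRight (x ^ 2)) x := by
  have hsq : HasFDerivAt (fun z : ℂ ↦ z ^ 2) ((2 * x) • ContinuousLinearMap.id ℝ ℂ) x := by
    simpa [two_nsmul, two_mul] using hasFDerivAt_pow (𝕜 := ℝ) 2 (x := x)
  exact (hasFDerivAt_norm_rpow_of_ne_zero hx p).smul hsq

theorem norm_fderiv_norm_rpow_smul_sq_le {x : ℂ} (hx : x ≠ 0) (p : ℝ) :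
    ‖fderiv ℝ (fun z : ℂ ↦ ‖z‖ ^ p • z ^ 2) x‖ ≤ (2 + |p|) * ‖x‖ ^ (p + 1) := by
  rw [(hasFDerivAt_norm_rpow_smul_sq hx p).fderiv]
  have hid : ‖(2 * x) • ContinuousLinearMap.id ℝ ℂ‖ ≤ 2 * ‖x‖ := by
    refine (norm_smul_le (2 * x) (ContinuousLinearMap.id ℝ ℂ)).trans ?_
    calc _ ≤ ‖2 * x‖ * 1 := by gcongr; exact ContinuousLinearMap.norm_id_le
      _ = 2 * ‖x‖ := by simp
  have hpow : ‖x‖ ^ (p - 1) * ‖x‖ ^ 2 = ‖x‖ ^ p * ‖x‖ := by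
    rw [← Real.rpow_natCast, ← Real.rpow_add (norm_pos_iff.2 hx),
      ← Real.rpow_add_one (norm_ne_zero_iff.2 hx)]
    ring_nf
  calc _ ≤ ‖x‖ ^ p * (2 * ‖x‖) + |p| * ‖x‖ ^ (p - 1) * ‖x‖ ^ 2 := by
        refine (norm_add_le _ _).trans (add_le_add ?_ ?_)
        · rw [norm_smul, Real.norm_of_nonneg (by positivity)]
          gcongr
        · rw [ContinuousLinearMap.norm_smulRight_apply, norm_smul_innerSL_eq hx, norm_pow]
    _ = (2 + |p|) * ‖x‖ ^ (p + 1) := by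
        rw [Real.rpow_add_one (norm_ne_zero_iff.2 hx)]
        linear_combination |p| * hpow

theorem norm_wirtingerZ_sub_le {α : ℝ} (hα : 1 ≤ α) (u v : ℂ) :
    ‖wirtingerZ (fun z ↦ ((‖z‖ ^ α : ℝ) : ℂ) * z) u
        - wirtingerZ (fun z ↦ ((‖z‖ ^ α : ℝ) : ℂ) * z) v‖
      ≤ (2 + α) * α * ‖u - v‖ * (‖u‖ ^ (α - 1) + ‖v‖ ^ (α - 1)) := by
  have hα0 : 0 < α := by linarith
  have hlip := norm_sub_le_of_rpow_bounds hα hα0.le (g := fun x : ℂ ↦ ‖x‖ ^ α)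
    (fun x ↦ by
      rw [Real.norm_of_nonneg (by positivity)]
      exact le_mul_of_one_le_left (by positivity) hα)
    (fun x hx ↦ (hasFDerivAt_norm_rpow_of_ne_zero hx α).differentiableAt)
    (fun x hx ↦ by
      rw [(hasFDerivAt_norm_rpow_of_ne_zero hx α).fderiv, norm_smul_innerSL_eq hx,
        abs_of_pos hα0]) u v
  rw [wirtingerZ_norm_rpow_mul hα0, wirtingerZ_norm_rpow_mul hα0, ← ofReal_sub, norm_real,
    ← mul_sub, norm_mul, Real.norm_of_nonneg (by positivity)]
  calc _ ≤ (1 + α / 2) * (2 * α * ‖u - v‖ * (‖u‖ ^ (α - 1) + ‖v‖ ^ (α - 1))) := by gcongr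
    _ = _ := by ring

theorem norm_wirtingerZbar_sub_le {α : ℝ} (hα : 1 ≤ α) (u v : ℂ) :
    ‖wirtingerZbar (fun z ↦ ((‖z‖ ^ α : ℝ) : ℂ) * z) u
        - wirtingerZbar (fun z ↦ ((‖z‖ ^ α : ℝ) : ℂ) * z) v‖
      ≤ α * (2 + |α - 2|) * ‖u - v‖ * (‖u‖ ^ (α - 1) + ‖v‖ ^ (α - 1)) := by
  have hα0 : 0 < α := by linarith
  have hK : 1 ≤ 2 + |α - 2| := by linarith [abs_nonneg (α - 2)]
  have hlip := norm_sub_le_of_rpow_bounds hα (zero_le_one.trans hK)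
    (g := fun x : ℂ ↦ ‖x‖ ^ (α - 2) • x ^ 2)
    (fun x ↦ by
      rw [norm_norm_rpow_sub_two_smul_sq hα0]
      exact le_mul_of_one_le_left (by positivity) hK)
    (fun x hx ↦ (hasFDerivAt_norm_rpow_smul_sq hx (α - 2)).differentiableAt)
    (fun x hx ↦ (norm_fderiv_norm_rpow_smul_sq_le hx (α - 2)).trans_eq (by ring_nf)) u v
  rw [wirtingerZbar_norm_rpow_mul hα0, wirtingerZbar_norm_rpow_mul hα0, ← smul_sub, norm_smul,
    Real.norm_of_nonneg (by positivity)]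
  calc _ ≤ α / 2 * (2 * (2 + |α - 2|) * ‖u - v‖ * (‖u‖ ^ (α - 1) + ‖v‖ ^ (α - 1))) := by gcongr
    _ = _ := by ring

/-- For `f(z) = |z|^{4/(N−2)} z` with `3 ≤ N ≤ 6`, the Wirtinger derivatives satisfy
`|∂_z f(u) − ∂_z f(v)| ≤ C|u−v|(|u|^{(6−N)/(N−2)} + |v|^{(6−N)/(N−2)})`, and similarly
for `∂_z̄ f`. -/
theorem stmt13 (N : ℕ) (hN3 : 3 ≤ N) (hN6 : N ≤ 6) :
    ∃ C > (0 : ℝ), ∀ u v : ℂ,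
      ‖wirtingerZ (fun z => ((‖z‖ ^ ((4 : ℝ) / ((N : ℝ) - 2)) : ℝ) : ℂ) * z) u
          - wirtingerZ (fun z => ((‖z‖ ^ ((4 : ℝ) / ((N : ℝ) - 2)) : ℝ) : ℂ) * z) v‖
        ≤ C * ‖u - v‖ * (‖u‖ ^ (((6 : ℝ) - N) / ((N : ℝ) - 2))
            + ‖v‖ ^ (((6 : ℝ) - N) / ((N : ℝ) - 2)))
      ∧ ‖wirtingerZbar (fun z => ((‖z‖ ^ ((4 : ℝ) / ((N : ℝ) - 2)) : ℝ) : ℂ) * z) u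
          - wirtingerZbar (fun z => ((‖z‖ ^ ((4 : ℝ) / ((N : ℝ) - 2)) : ℝ) : ℂ) * z) v‖
        ≤ C * ‖u - v‖ * (‖u‖ ^ (((6 : ℝ) - N) / ((N : ℝ) - 2))
            + ‖v‖ ^ (((6 : ℝ) - N) / ((N : ℝ) - 2))) := by
  have hd : (0 : ℝ) < N - 2 := by
    have : (3 : ℝ) ≤ N := by exact_mod_cast hN3
    linarith
  have hexp : ((6 : ℝ) - N) / ((N : ℝ) - 2) = 4 / ((N : ℝ) - 2) - 1 := by
    field_simp
    ring
  set α := (4 : ℝ) / ((N : ℝ) - 2)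
  have hα : 1 ≤ α := by
    rw [le_div_iff₀ hd]
    have : (N : ℝ) ≤ 6 := by exact_mod_cast hN6
    linarith
  rw [hexp]
  refine ⟨max ((2 + α) * α) (α * (2 + |α - 2|)), by positivity, fun u v ↦ ⟨?_, ?_⟩⟩
  · exact (norm_wirtingerZ_sub_le hα u v).trans (by gcongr; exact le_max_left _ _)
  · exact (norm_wirtingerZbar_sub_le hα u v).trans (by gcongr; exact le_max_right _ _)
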